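/- Let β > 0, let v_1,…,v_N > 0 and ρ_1,…,ρ_N ∈ [0,1] with at least one ρ_i in the open interval (0,1), and define f(η) = Σ_{i=1}^{N} v_i h(ρ_i,β,η) − Σ_{i=1}^{N} v_i ρ_i. Then f is continuous on [0,1] and there exists η* ∈ (0,1) such that f(η*) = 0; that is, there is a threshold value that exactly preserves the total material volume under the Heaviside projection. -/

import Mathlib

/-! At `η = 0` the projection is `tanh (β ρ) / tanh β`, which is at least `ρ` because `tanh` is
strictly concave on `[0, ∞)` and vanishes at `0`, with strict inequality for `ρ ∈ (0, 1)`. The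
symmetry `h(ρ, β, 1) = 1 - h(1 - ρ, β, 0)` turns this into `h(ρ, β, 1) ≤ ρ`. Hence `f 0 > 0 > f 1`,
and the intermediate value theorem yields the threshold. -/

/-- The tanh-based Heaviside projection. -/
noncomputable def heavisideProj (ρ β η : ℝ) : ℝ :=
  (Real.tanh (β * η) + Real.tanh (β * (ρ - η))) /
    (Real.tanh (β * η) + Real.tanh (β * (1 - η)))

open Real Set

namespace Real

theorem hasDerivAt_tanh (x : ℝ) : HasDerivAt tanh (cosh x ^ 2)⁻¹ x := by
  have h := (hasDerivAt_sinh x).div (hasDerivAt_cosh x) (cosh_pos x).ne'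
  rw [show tanh = sinh / cosh from funext tanh_eq_sinh_div_cosh]
  exact h.congr_deriv (by rw [← sq, ← sq, cosh_sq_sub_sinh_sq, one_div])

@[fun_prop]
theorem continuous_tanh : Continuous tanh :=
  continuous_iff_continuousAt.2 fun x => (hasDerivAt_tanh x).continuousAt

theorem tanh_pos {x : ℝ} (hx : 0 < x) : 0 < tanh x := by
  rw [tanh_eq_sinh_div_cosh]
  exact div_pos (sinh_pos_iff.2 hx) (cosh_pos x)

theorem tanh_nonneg {x : ℝ} (hx : 0 ≤ x) : 0 ≤ tanh x :=
  hx.eq_or_lt.elim (fun h => by simp [← h]) fun h => (tanh_pos h).le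

theorem strictConcaveOn_tanh : StrictConcaveOn ℝ (Ici 0) tanh := by
  refine StrictAntiOn.strictConcaveOn_of_deriv (convex_Ici 0) continuous_tanh.continuousOn ?_
  rw [interior_Ici, funext fun x => (hasDerivAt_tanh x).deriv]
  intro x hx y hy hxy
  have hcosh := cosh_strictMonoOn (Ioi_subset_Ici_self hx) (Ioi_subset_Ici_self hy) hxy
  have := cosh_pos x
  show (cosh y ^ 2)⁻¹ < (cosh x ^ 2)⁻¹
  gcongr

end Real

theorem StrictConcaveOn.mul_lt_apply_mul {f : ℝ → ℝ} (hf : StrictConcaveOn ℝ (Ici 0) f)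
    (hf0 : f 0 = 0) {x r : ℝ} (hx : 0 < x) (hr : r ∈ Ioo 0 1) : r * f x < f (r * x) := by
  have h := hf.2 (self_mem_Ici (a := (0:ℝ))) (mem_Ici.2 hx.le) hx.ne (sub_pos.2 hr.2) hr.1 (by ring)
  simpa [hf0] using h

theorem ConcaveOn.mul_le_apply_mul {f : ℝ → ℝ} (hf : ConcaveOn ℝ (Ici 0) f)
    (hf0 : f 0 = 0) {x r : ℝ} (hx : 0 ≤ x) (hr : r ∈ Icc 0 1) : r * f x ≤ f (r * x) := by
  have h := hf.2 (self_mem_Ici (a := (0:ℝ))) (mem_Ici.2 hx) (sub_nonneg.2 hr.2) hr.1 (by ring)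
  simpa [hf0] using h

section heavisideProj

variable {ρ β η : ℝ}

theorem heavisideProj_denom_pos (hβ : 0 < β) (hη : η ∈ Icc 0 1) :
    0 < tanh (β * η) + tanh (β * (1 - η)) := by
  obtain ⟨hη0, hη1⟩ := hη
  rcases hη0.eq_or_lt with rfl | hη0
  · simpa using tanh_pos hβ
  · exact add_pos_of_pos_of_nonneg (tanh_pos (by positivity))
      (tanh_nonneg (mul_nonneg hβ.le (sub_nonneg.2 hη1)))

theorem continuousOn_heavisideProj (hβ : 0 < β) : ContinuousOn (heavisideProj ρ β) (Icc 0 1) := by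
  unfold heavisideProj
  exact ContinuousOn.div (by fun_prop) (by fun_prop) fun η hη => (heavisideProj_denom_pos hβ hη).ne'

theorem heavisideProj_zero : heavisideProj ρ β 0 = tanh (β * ρ) / tanh β := by
  simp [heavisideProj]

theorem heavisideProj_one (hβ : β ≠ 0) : heavisideProj ρ β 1 = 1 - heavisideProj (1 - ρ) β 0 := by
  have hT : tanh β ≠ 0 := fun h => hβ (tanh_injective (h.trans tanh_zero.symm))
  have hneg : β * (ρ - 1) = -(β * (1 - ρ)) := by ring
  rw [heavisideProj_zero, heavisideProj, hneg, tanh_neg, mul_one, sub_self, mul_zero, tanh_zero,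
    add_zero]
  field_simp
  ring

theorem le_heavisideProj_zero (hβ : 0 < β) (hρ : ρ ∈ Icc 0 1) : ρ ≤ heavisideProj ρ β 0 := by
  rw [heavisideProj_zero, le_div_iff₀ (tanh_pos hβ), mul_comm β]
  exact strictConcaveOn_tanh.concaveOn.mul_le_apply_mul tanh_zero hβ.le hρ

theorem lt_heavisideProj_zero (hβ : 0 < β) (hρ : ρ ∈ Ioo 0 1) : ρ < heavisideProj ρ β 0 := by
  rw [heavisideProj_zero, lt_div_iff₀ (tanh_pos hβ), mul_comm β]
  exact strictConcaveOn_tanh.mul_lt_apply_mul tanh_zero hβ hρ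

theorem heavisideProj_one_le (hβ : 0 < β) (hρ : ρ ∈ Icc 0 1) : heavisideProj ρ β 1 ≤ ρ := by
  have := le_heavisideProj_zero hβ (show 1 - ρ ∈ Icc 0 1 by constructor <;> linarith [hρ.1, hρ.2])
  rw [heavisideProj_one hβ.ne']
  linarith

theorem heavisideProj_one_lt (hβ : 0 < β) (hρ : ρ ∈ Ioo 0 1) : heavisideProj ρ β 1 < ρ := by
  have := lt_heavisideProj_zero hβ (show 1 - ρ ∈ Ioo 0 1 by constructor <;> linarith [hρ.1, hρ.2])
  rw [heavisideProj_one hβ.ne']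
  linarith

end heavisideProj

theorem Fintype.sum_mul_lt_sum_mul {ι : Type*} [Fintype ι] {v a b : ι → ℝ} (hv : ∀ i, 0 < v i)
    (hab : ∀ i, a i ≤ b i) (hlt : ∃ i, a i < b i) : ∑ i, v i * a i < ∑ i, v i * b i := by
  obtain ⟨j, hj⟩ := hlt
  exact Finset.sum_lt_sum (fun i _ => mul_le_mul_of_nonneg_left (hab i) (hv i).le)
    ⟨j, Finset.mem_univ j, mul_lt_mul_of_pos_left hj (hv j)⟩

theorem volume_preserving_threshold_exists (N : ℕ) (β : ℝ) (hβ : 0 < β)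
    (v ρ : Fin N → ℝ) (hv : ∀ i, 0 < v i) (hρ : ∀ i, ρ i ∈ Set.Icc (0:ℝ) 1)
    (f : ℝ → ℝ)
    (hf : ∀ η, f η = (∑ i, v i * heavisideProj (ρ i) β η) - ∑ i, v i * ρ i)
    (hmid : ∃ i, ρ i ∈ Set.Ioo (0:ℝ) 1) :
    ContinuousOn f (Set.Icc (0:ℝ) 1) ∧ ∃ η' ∈ Set.Ioo (0:ℝ) 1, f η' = 0 := by
  obtain ⟨j, hj⟩ := hmid
  have hcont : ContinuousOn f (Icc 0 1) :=
    ((continuousOn_finsetSum _ fun i _ => (continuousOn_heavisideProj hβ).const_smul (v i)).sub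
      continuousOn_const).congr fun η _ => hf η
  have hf0 : 0 < f 0 := by
    rw [hf, sub_pos]
    exact Fintype.sum_mul_lt_sum_mul hv (fun i => le_heavisideProj_zero hβ (hρ i))
      ⟨j, lt_heavisideProj_zero hβ hj⟩
  have hf1 : f 1 < 0 := by
    rw [hf, sub_neg]
    exact Fintype.sum_mul_lt_sum_mul hv (fun i => heavisideProj_one_le hβ (hρ i))
      ⟨j, heavisideProj_one_lt hβ hj⟩
  exact ⟨hcont, intermediate_value_Ioo' zero_le_one hcont ⟨hf1, hf0⟩⟩
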